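/- Let Γ be a countable discrete group, (X,μ) a standard probability space, K the Cantor set, and a_n, a measure-preserving actions of Γ on (X,μ). Then d(a_n,a) → 0 if and only if the closures of E(a_n,K) converge to the closure of E(a,K) in the Hausdorff metric topology on the hyperspace of compact subsets of M_s(K^Γ). In other words, the topology on A_∼(Γ,X,μ) induced by the metric d coincides with the initial topology induced by the map a ↦ closure of E(a,K). -/

import Mathlib

open MeasureTheory Filter Topology Set

/-- A measure-preserving action of a group `Γ` on a measure space `(X, μ)`. -/
structure MPAction (Γ : Type*) [Group Γ] (X : Type*) [MeasurableSpace X]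
    (μ : MeasureTheory.Measure X) where
  act : Γ → X → X
  measurePreserving_act : ∀ γ : Γ, MeasureTheory.MeasurePreserving (act γ) μ μ
  act_one : ∀ x, act 1 x = x
  act_mul : ∀ γ δ x, act (γ * δ) x = act γ (act δ x)

namespace MPAction

variable {Γ : Type*} [Group Γ] {X : Type*} [MeasurableSpace X] {μ : Measure X}
  {Y : Type*} [MeasurableSpace Y] {ν : Measure Y}
  {W : Type*} [MeasurableSpace W] {ρ : Measure W}

/-- Weak containment of measure-preserving actions. -/
def WeaklyContained (a : MPAction Γ X μ) (b : MPAction Γ Y ν) : Prop :=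
  ∀ (n : ℕ) (A : Fin n → Set X), (∀ i, MeasurableSet (A i)) →
    ∀ (F : Finset Γ) (ε : ℝ), 0 < ε →
      ∃ B : Fin n → Set Y, (∀ i, MeasurableSet (B i)) ∧
        ∀ γ ∈ F, ∀ i j : Fin n,
          |(μ (a.act γ '' A i ∩ A j)).toReal - (ν (b.act γ '' B i ∩ B j)).toReal| < ε

/-- Weak equivalence of measure-preserving actions. -/
def WeakEquiv (a : MPAction Γ X μ) (b : MPAction Γ Y ν) : Prop :=
  WeaklyContained a b ∧ WeaklyContained b a

/-- A finite measurable partition of the space. -/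
def IsPartition {k : ℕ} (A : Fin k → Set X) : Prop :=
  (∀ i, MeasurableSet (A i)) ∧ Pairwise (Function.onFun Disjoint A) ∧ (⋃ i, A i) = Set.univ

/-- The compact set `C_{n,k}(a) ⊆ [0,1]^{n × k × k}`: the closure of the collection of
matrices of measures `μ(γ_p^a A_q ∩ A_r)` over all measurable `k`-partitions, with respect
to the fixed enumeration `e` of the group. -/
noncomputable def Cnk (e : ℕ → Γ) (a : MPAction Γ X μ) (n k : ℕ) :
    Set ((Fin n × Fin k × Fin k) → ℝ) :=
  closure { v | ∃ A : Fin k → Set X, IsPartition A ∧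
    ∀ (p : Fin n) (q r : Fin k), v (p, q, r) = (μ (a.act (e p.1) '' A q ∩ A r)).toReal }

/-- The metric `d` on weak equivalence classes:
`d(a,b) = Σ_{n,k} 2^{-(n+k)} d_H(C_{n,k}(a), C_{n,k}(b))`. -/
noncomputable def dWE (e : ℕ → Γ) (a : MPAction Γ X μ) (b : MPAction Γ Y ν) : ℝ :=
  ∑' nk : ℕ × ℕ, (2 : ℝ) ^ (-(nk.1 : ℤ) - (nk.2 : ℤ)) *
    Metric.hausdorffDist (Cnk e a nk.1 nk.2) (Cnk e b nk.1 nk.2)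

section Mix

variable {ι : Type*} {Z : ι → Type*} [∀ i, MeasurableSpace (Z i)]

theorem measurable_sigmaMk' (i : ι) : Measurable (@Sigma.mk ι Z i) :=
  measurable_iff_le_map.2 (iInf_le _ i)

theorem measurable_of_sigma {δ : Type*} [MeasurableSpace δ] {f : Sigma Z → δ}
    (hf : ∀ i, Measurable (f ∘ Sigma.mk i)) : Measurable f := by
  intro s hs
  rw [Sigma.instMeasurableSpace, MeasurableSpace.measurableSet_iInf]
  intro i
  exact hf i hs

/-- The measure `Σ_i λ_i ν_i` on the disjoint union `⊔_i Z_i`. -/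
noncomputable def mixMeasure (lam : ι → ℝ) (νs : ∀ i, Measure (Z i)) :
    Measure ((i : ι) × Z i) :=
  Measure.sum fun i => ENNReal.ofReal (lam i) • (νs i).map (Sigma.mk i)

instance mixMeasure.instSFinite [Countable ι] (lam : ι → ℝ) (νs : ∀ i, Measure (Z i))
    [∀ i, SFinite (νs i)] : SFinite (mixMeasure lam νs) := by
  unfold mixMeasure
  infer_instance

/-- The convex combination `Σ_i λ_i a_i` of measure-preserving actions, acting on the
disjoint union `⊔_i Z_i` with the measure `Σ_i λ_i ν_i`. -/
noncomputable def mix [Countable ι] {νs : ∀ i, Measure (Z i)} (lam : ι → ℝ)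
    (a : ∀ i, MPAction Γ (Z i) (νs i)) : MPAction Γ ((i : ι) × Z i) (mixMeasure lam νs) where
  act γ p := ⟨p.1, (a p.1).act γ p.2⟩
  measurePreserving_act γ := by
    have hmeas : Measurable fun p : (i : ι) × Z i => (⟨p.1, (a p.1).act γ p.2⟩ : (i : ι) × Z i) := by
      apply measurable_of_sigma
      intro i
      exact (measurable_sigmaMk' i).comp ((a i).measurePreserving_act γ).measurable
    refine ⟨hmeas, ?_⟩
    refine Measure.ext fun s hs => ?_
    rw [Measure.map_apply hmeas hs]
    rw [mixMeasure, Measure.sum_apply _ (hmeas hs), Measure.sum_apply _ hs]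
    congr 1
    funext i
    rw [Measure.smul_apply, Measure.smul_apply,
      Measure.map_apply (measurable_sigmaMk' i) (hmeas hs),
      Measure.map_apply (measurable_sigmaMk' i) hs]
    congr 1
    have hpre : (Sigma.mk i) ⁻¹'
        ((fun p : (i : ι) × Z i => (⟨p.1, (a p.1).act γ p.2⟩ : (i : ι) × Z i)) ⁻¹' s)
        = ((a i).act γ) ⁻¹' (Sigma.mk i ⁻¹' s) := rfl
    rw [hpre]
    exact ((a i).measurePreserving_act γ).measure_preimage
      ((measurable_sigmaMk' i) hs).nullMeasurableSet
  act_one p := by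
    cases p with
    | mk i x => simp only [(a i).act_one]
  act_mul γ δ p := by
    cases p with
    | mk i x => simp only [(a i).act_mul]

end Mix

/-- The binary convex combination `t a + (1 - t) b` of two actions on `(X, μ)`,
realized on the disjoint union of two copies of `X` carrying measures `tμ` and `(1-t)μ`. -/
noncomputable def convComb (t : ℝ) (a b : MPAction Γ X μ) :
    MPAction Γ ((_ : Fin 2) × X) (mixMeasure ![t, 1 - t] fun _ => μ) :=
  mix (νs := fun _ => μ) ![t, 1 - t] ![a, b]

/-- The trivial action. -/
def trivAction (Γ : Type*) [Group Γ] (Y : Type*) [MeasurableSpace Y] (ν : Measure Y) :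
    MPAction Γ Y ν where
  act _ y := y
  measurePreserving_act _ := MeasurePreserving.id ν
  act_one _ := rfl
  act_mul _ _ _ := rfl

/-- The product of two measure-preserving actions. -/
noncomputable def prodAction [SFinite μ] [SFinite ν] (a : MPAction Γ X μ) (b : MPAction Γ Y ν) :
    MPAction Γ (X × Y) (μ.prod ν) where
  act γ := Prod.map (a.act γ) (b.act γ)
  measurePreserving_act γ := (a.measurePreserving_act γ).prod (b.measurePreserving_act γ)
  act_one p := by simp [Prod.map, a.act_one, b.act_one]
  act_mul γ δ p := by simp [Prod.map, a.act_mul, b.act_mul]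

/-- Stable weak containment: `a ≺_s b` iff `a ≺ ι × b`, where `ι` is the trivial action of `Γ`
on the standard probability space `(X₀, μ₀)`. -/
def StableWeaklyContained {X₀ : Type*} [MeasurableSpace X₀] (μ₀ : Measure X₀) [SFinite μ₀]
    (a : MPAction Γ W ρ) (b : MPAction Γ Y ν) [SFinite ν] : Prop :=
  WeaklyContained a (prodAction (trivAction Γ X₀ μ₀) b)

/-- Stable weak equivalence. -/
def StableWeakEquiv {X₀ : Type*} [MeasurableSpace X₀] (μ₀ : Measure X₀) [SFinite μ₀]
    (a : MPAction Γ W ρ) [SFinite ρ] (b : MPAction Γ Y ν) [SFinite ν] : Prop :=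
  StableWeaklyContained μ₀ a b ∧ StableWeaklyContained μ₀ b a

/-- An action is ergodic if every strictly invariant measurable set is null or conull. -/
def IsErgodicAction (a : MPAction Γ X μ) : Prop :=
  ∀ A : Set X, MeasurableSet A → (∀ γ, a.act γ ⁻¹' A = A) → μ A = 0 ∨ μ Aᶜ = 0

/-- An action is (essentially) free if almost every point has trivial stabilizer. -/
def IsFreeAction (a : MPAction Γ X μ) : Prop :=
  ∀ᵐ x ∂μ, ∀ γ : Γ, γ ≠ 1 → a.act γ x ≠ x

end MPAction

section Cylinders

/-- The Cantor set. -/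
abbrev Cantor : Type := ℕ → Bool

/-- Basic clopen subsets of the Cantor set: sets determined by finitely many coordinates. -/
def cantorBasic : Set (Set Cantor) :=
  { B | ∃ (s : Finset ℕ) (σ : ℕ → Bool), B = {x : Cantor | ∀ n ∈ s, x n = σ n} }

/-- The clopen cylinder subsets of `K^Γ` of the form `π_F⁻¹(Π_{γ ∈ F} A_γ)` with `F ⊆ Γ`
finite and each `A_γ` a basic clopen subset of the Cantor set `K`. -/
def KCyl (Γ : Type*) : Set (Set (Γ → Cantor)) :=
  { C | ∃ (F : Finset Γ) (B : Γ → Set Cantor),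
      (∀ γ ∈ F, B γ ∈ cantorBasic) ∧ C = {f | ∀ γ ∈ F, f γ ∈ B γ} }

/-- The basic clopen cylinder subsets of `L^Γ` for a finite set `L`:
sets of the form `∩_{γ ∈ F} π_γ⁻¹({j_γ})`. -/
def LCyl (Γ : Type*) (L : Type*) : Set (Set (Γ → L)) :=
  { C | ∃ (F : Finset Γ) (j : Γ → L), C = {f | ∀ γ ∈ F, f γ = j γ} }

/-- `A` enumerates the collection of sets `S`. -/
def Enumerates {M : Type*} (A : ℕ → Set M) (S : Set (Set M)) : Prop :=
  (∀ i, A i ∈ S) ∧ ∀ C ∈ S, ∃ i, A i = C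

/-- The compatible metric `δ(ν,ρ) = Σ_i 2^{-(i+1)} |ν(A_i) - ρ(A_i)|` on the space of
probability measures, determined by an enumeration `A` of a generating family of sets. -/
noncomputable def deltaEnum {M : Type*} [MeasurableSpace M] (A : ℕ → Set M)
    (m m' : MeasureTheory.Measure M) : ℝ :=
  ∑' i : ℕ, (2 : ℝ) ^ (-(i : ℤ) - 1) * |(m (A i)).toReal - (m' (A i)).toReal|

/-- Convergence of a sequence of sets of measures to a set of measures in the Hausdorff
(metric) sense, with respect to a metric `δ`: for every `ε > 0`, eventually each of the two
sets is contained in the `ε`-neighbourhood of the other.  (Equivalently, the closures converge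
in the Hausdorff metric topology on the hyperspace of compact subsets.) -/
def HausTendsto {M : Type*} [MeasurableSpace M]
    (δ : MeasureTheory.Measure M → MeasureTheory.Measure M → ℝ)
    (En : ℕ → Set (MeasureTheory.Measure M)) (E : Set (MeasureTheory.Measure M)) : Prop :=
  ∀ ε : ℝ, 0 < ε → ∃ N : ℕ, ∀ n ≥ N,
    (∀ m ∈ En n, ∃ m' ∈ E, δ m m' < ε) ∧ (∀ m' ∈ E, ∃ m ∈ En n, δ m m' < ε)

variable {Γ : Type*} [Group Γ] {X : Type*} [MeasurableSpace X] {μ : MeasureTheory.Measure X}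

/-- The map `Φ^{φ,a} : X → S^Γ`, `Φ^{φ,a}(x)(γ) = φ((γ⁻¹)^a x)`, associated to an observable
`φ : X → S` and an action `a`. -/
def MPAction.phiMap (a : MPAction Γ X μ) {S : Type*} (φ : X → S) : X → (Γ → S) :=
  fun x γ => φ (a.act γ⁻¹ x)

/-- The set `E(a,S) = {(Φ^{φ,a})_* μ : φ : X → S measurable}` of shift-invariant measures
on `S^Γ` associated to the action `a`. -/
noncomputable def MPAction.ESet (a : MPAction Γ X μ) (S : Type*) [MeasurableSpace S] :
    Set (MeasureTheory.Measure (Γ → S)) :=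
  { m | ∃ φ : X → S, Measurable φ ∧ m = μ.map (a.phiMap φ) }

end Cylinders

/-!
Both sides of the equivalence are finitary approximation statements. By dominated convergence,
`d(aₘ, b) → 0` means that for all `n, k` the sets `C_{n,k}` converge in Hausdorff distance, i.e.
eventually every statistic `(μ(γ_p P_q ∩ P_r))` of a `k`-partition for one action is close to one
for the other action. Likewise, Hausdorff convergence of the sets `E(·, K)` for `δ_K` means that
eventually every distribution of an observable `X → K`, tested on the first `N` cylinder sets, is
close to one for the other action.

A `k`-partition is the pullback of a clopen `k`-partition of `K` under an observable, and its
statistics are the masses of two-coordinate cylinders under `Φ^{φ,a}`. Conversely, the first `N`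
cylinder sets only see finitely many coordinates `F × S ⊆ Γ × ℕ`, so the relevant distribution of
`Φ^{φ,a}` is determined by the statistics of the partition of `X` by `F × S`-names. A partition
with nearly the same statistics for the other action gives the observable that copies the label at
`1`; its names agree with the labels except on a set whose measure is controlled by the
statistics of pairs of labels that are incompatible for the first action.
-/

open Metric

theorem tendsto_tsum_mul_nhds_zero_iff {α ι : Type*} {l : Filter α} {w : ι → ℝ}
    (hw : ∀ i, 0 < w i) (hws : Summable w) {f : α → ι → ℝ} (hf : ∀ m i, f m i ∈ Icc 0 1) :
    Tendsto (fun m => ∑' i, w i * f m i) l (𝓝 0) ↔ ∀ i, Tendsto (fun m => f m i) l (𝓝 0) := by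
  have hterm : ∀ m i, w i * f m i ∈ Icc 0 (w i) := fun m i =>
    ⟨mul_nonneg (hw i).le (hf m i).1, mul_le_of_le_one_right (hw i).le (hf m i).2⟩
  constructor
  · intro h i
    have hle : ∀ m, f m i ≤ (w i)⁻¹ * ∑' j, w j * f m j := fun m => by
      rw [le_inv_mul_iff₀ (hw i)]
      exact (hws.of_nonneg_of_le (fun j => (hterm m j).1) fun j => (hterm m j).2).le_tsum i
        fun j _ => (hterm m j).1
    refine squeeze_zero (fun m => (hf m i).1) hle ?_
    simpa using h.const_mul (w i)⁻¹
  · intro h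
    simpa using tendsto_tsum_of_dominated_convergence hws (fun i => (h i).const_mul (w i))
      (Eventually.of_forall fun m i => by
        rw [Real.norm_of_nonneg (hterm m i).1]
        exact (hterm m i).2)

theorem two_zpow_neg_sub_natCast (i j : ℕ) : (2 : ℝ) ^ (-(i : ℤ) - j) = (1 / 2) ^ (i + j) := by
  rw [← neg_add', ← Nat.cast_add, zpow_neg, zpow_natCast, one_div, inv_pow]

theorem summable_two_zpow_neg_sub :
    Summable fun nk : ℕ × ℕ => (2 : ℝ) ^ (-(nk.1 : ℤ) - nk.2) := by
  simp only [two_zpow_neg_sub_natCast, pow_add]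
  exact summable_geometric_two.mul_of_nonneg summable_geometric_two (fun _ => by positivity)
    fun _ => by positivity

theorem tendsto_hausdorffDist_nhds_zero_iff {α ι : Type*} [PseudoMetricSpace α] {l : Filter ι}
    {S : ι → Set α} {T : Set α} (hfin : ∀ i, hausdorffEDist (S i) T ≠ ⊤) :
    Tendsto (fun i => hausdorffDist (S i) T) l (𝓝 0) ↔
      ∀ ε > 0, ∀ᶠ i in l, S i ⊆ thickening ε T ∧ T ⊆ thickening ε (S i) := by
  simp only [Metric.tendsto_nhds, Real.dist_eq, sub_zero, abs_of_nonneg hausdorffDist_nonneg]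
  constructor
  · intro h ε hε
    filter_upwards [h ε hε] with i hi
    refine ⟨fun x hx => mem_thickening_iff.2 ?_, fun y hy => mem_thickening_iff.2 ?_⟩
    · exact exists_dist_lt_of_hausdorffDist_lt hx hi (hfin i)
    · obtain ⟨x, hx, hxy⟩ := exists_dist_lt_of_hausdorffDist_lt' hy hi (hfin i)
      exact ⟨x, hx, dist_comm x y ▸ hxy⟩
  · intro h ε hε
    filter_upwards [h (ε / 2) (half_pos hε)] with i hi
    refine (hausdorffDist_le_of_mem_dist (half_pos hε).le (fun x hx => ?_) fun y hy => ?_).trans_lt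
      (half_lt_self hε)
    · obtain ⟨y, hy, hxy⟩ := mem_thickening_iff.1 (hi.1 hx)
      exact ⟨y, hy, hxy.le⟩
    · obtain ⟨x, hx, hxy⟩ := mem_thickening_iff.1 (hi.2 hy)
      exact ⟨x, hx, hxy.le⟩

section HalfPowSeries

variable {d : ℕ → ℝ}

theorem summable_half_pow_mul (hd : ∀ i, d i ∈ Icc 0 1) :
    Summable fun i => (1 / 2 : ℝ) ^ (i + 1) * d i :=
  (summable_geometric_two.mul_right (1 / 2)).of_nonneg_of_le
    (fun i => mul_nonneg (by positivity) (hd i).1)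
    fun i => by rw [← pow_succ]; exact mul_le_of_le_one_right (by positivity) (hd i).2

theorem half_pow_mul_le_tsum (hd : ∀ i, d i ∈ Icc 0 1) (i : ℕ) :
    (1 / 2 : ℝ) ^ (i + 1) * d i ≤ ∑' j, (1 / 2 : ℝ) ^ (j + 1) * d j :=
  (summable_half_pow_mul hd).le_tsum i fun j _ => mul_nonneg (by positivity) (hd j).1

theorem tsum_half_pow_mul_le (hd : ∀ i, d i ∈ Icc 0 1) {N : ℕ} {ε : ℝ} (hε : 0 ≤ ε)
    (hN : ∀ i < N, d i ≤ ε) : ∑' j, (1 / 2 : ℝ) ^ (j + 1) * d j ≤ ε + (1 / 2) ^ N := by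
  have hs := summable_half_pow_mul hd
  rw [← hs.sum_add_tsum_nat_add N]
  gcongr
  · calc ∑ j ∈ Finset.range N, (1 / 2 : ℝ) ^ (j + 1) * d j
        ≤ ∑ j ∈ Finset.range N, (1 / 2 : ℝ) ^ (j + 1) * ε :=
          Finset.sum_le_sum fun j hj => by gcongr; exact hN j (Finset.mem_range.1 hj)
      _ ≤ ε := by
          simp_rw [← Finset.sum_mul, pow_succ, ← Finset.sum_mul]
          refine mul_le_of_le_one_left hε ?_
          linarith [sum_geometric_two_le N]
  · calc ∑' j, (1 / 2 : ℝ) ^ (j + N + 1) * d (j + N)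
        ≤ ∑' j, (1 / 2 : ℝ) ^ N * ((1 / 2) ^ j * (1 / 2)) := by
          refine ((summable_nat_add_iff N).2 hs).tsum_le_tsum (fun j => ?_)
            ((summable_geometric_two.mul_right _).mul_left _)
          rw [← pow_succ, ← pow_add, show N + (j + 1) = j + N + 1 by ring]
          exact mul_le_of_le_one_right (by positivity) (hd _).2
      _ = (1 / 2) ^ N := by rw [tsum_mul_left, tsum_mul_right, tsum_geometric_two]; ring

end HalfPowSeries

section DeltaEnum

variable {M : Type*} [MeasurableSpace M] (A : ℕ → Set M) (m m' : Measure M)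

theorem deltaEnum_eq_tsum :
    deltaEnum A m m' = ∑' i, (1 / 2 : ℝ) ^ (i + 1) * |m.real (A i) - m'.real (A i)| := by
  simp only [deltaEnum, ← two_zpow_neg_sub_natCast, Nat.cast_one, measureReal_def]

theorem deltaEnum_comm : deltaEnum A m m' = deltaEnum A m' m := by
  simp only [deltaEnum, abs_sub_comm]

variable [IsProbabilityMeasure m] [IsProbabilityMeasure m']

theorem abs_measureReal_sub_mem_Icc (s : Set M) : |m.real s - m'.real s| ∈ Icc 0 1 := by
  have h : m.real s ≤ 1 := measureReal_le_one
  have h' : m'.real s ≤ 1 := measureReal_le_one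
  have h0 : 0 ≤ m.real s := measureReal_nonneg
  have h0' : 0 ≤ m'.real s := measureReal_nonneg
  exact ⟨abs_nonneg _, abs_sub_le_iff.2 ⟨by linarith, by linarith⟩⟩

theorem abs_measureReal_sub_le_deltaEnum (i : ℕ) :
    |m.real (A i) - m'.real (A i)| ≤ 2 ^ (i + 1) * deltaEnum A m m' := by
  rw [deltaEnum_eq_tsum, ← inv_mul_le_iff₀ (by positivity), ← inv_pow, inv_eq_one_div]
  exact half_pow_mul_le_tsum (fun j => abs_measureReal_sub_mem_Icc m m' (A j)) i

theorem deltaEnum_le_of_forall_lt {N : ℕ} {ε : ℝ} (hε : 0 ≤ ε)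
    (hN : ∀ i < N, |m.real (A i) - m'.real (A i)| ≤ ε) : deltaEnum A m m' ≤ ε + (1 / 2) ^ N := by
  rw [deltaEnum_eq_tsum]
  exact tsum_half_pow_mul_le (fun j => abs_measureReal_sub_mem_Icc m m' (A j)) hε hN

end DeltaEnum

section ApproxOnFirst

variable {M : Type*} [MeasurableSpace M] (A : ℕ → Set M)

def ApproxOnFirst (N : ℕ) (ε : ℝ) (E E' : Set (Measure M)) : Prop :=
  ∀ m ∈ E, ∃ m' ∈ E', ∀ i < N, |m.real (A i) - m'.real (A i)| < ε

variable {A} {E E' : Set (Measure M)}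

theorem approxOnFirst_of_deltaEnum_lt (hE : ∀ m ∈ E, IsProbabilityMeasure m)
    (hE' : ∀ m ∈ E', IsProbabilityMeasure m) {N : ℕ} {ε : ℝ}
    (h : ∀ m ∈ E, ∃ m' ∈ E', deltaEnum A m m' < ε / 2 ^ N) : ApproxOnFirst A N ε E E' := by
  intro m hm
  obtain ⟨m', hm', hδ⟩ := h m hm
  have := hE m hm
  have := hE' m' hm'
  refine ⟨m', hm', fun i hi => ?_⟩
  have hδ0 : 0 ≤ deltaEnum A m m' := by
    rw [deltaEnum_eq_tsum]
    exact tsum_nonneg fun i => mul_nonneg (by positivity) (abs_nonneg _)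
  calc |m.real (A i) - m'.real (A i)| ≤ 2 ^ (i + 1) * deltaEnum A m m' :=
        abs_measureReal_sub_le_deltaEnum A m m' i
    _ ≤ 2 ^ N * deltaEnum A m m' := by gcongr <;> [norm_num; omega]
    _ < 2 ^ N * (ε / 2 ^ N) := by gcongr
    _ = ε := mul_div_cancel₀ ε (by positivity)

theorem ApproxOnFirst.exists_deltaEnum_le {N : ℕ} {ε : ℝ} (h : ApproxOnFirst A N ε E E')
    (hE : ∀ m ∈ E, IsProbabilityMeasure m) (hE' : ∀ m ∈ E', IsProbabilityMeasure m) (hε : 0 ≤ ε) :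
    ∀ m ∈ E, ∃ m' ∈ E', deltaEnum A m m' ≤ ε + (1 / 2) ^ N := by
  intro m hm
  obtain ⟨m', hm', hclose⟩ := h m hm
  have := hE m hm
  have := hE' m' hm'
  exact ⟨m', hm', deltaEnum_le_of_forall_lt A m m' hε fun i hi => (hclose i hi).le⟩

theorem hausTendsto_deltaEnum_iff {En : ℕ → Set (Measure M)}
    (hEn : ∀ n, ∀ m ∈ En n, IsProbabilityMeasure m) (hE : ∀ m ∈ E, IsProbabilityMeasure m) :
    HausTendsto (deltaEnum A) En E ↔
      ∀ N, ∀ ε > 0, ∀ᶠ n in atTop, ApproxOnFirst A N ε (En n) E ∧ ApproxOnFirst A N ε E (En n) := by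
  simp_rw [HausTendsto, ← eventually_atTop]
  constructor
  · intro h N ε hε
    filter_upwards [h (ε / 2 ^ N) (by positivity)] with n hn
    refine ⟨approxOnFirst_of_deltaEnum_lt (hEn n) hE hn.1, approxOnFirst_of_deltaEnum_lt hE (hEn n)
      fun m hm => ?_⟩
    obtain ⟨m', hm', hδ⟩ := hn.2 m hm
    exact ⟨m', hm', deltaEnum_comm A m' m ▸ hδ⟩
  · intro h ε hε
    obtain ⟨N, hN⟩ := exists_pow_lt_of_lt_one (half_pos hε) one_half_lt_one
    filter_upwards [h N (ε / 2) (half_pos hε)] with n hn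
    have hlt : ε / 2 + (1 / 2) ^ N < ε := by linarith
    refine ⟨fun m hm => ?_, fun m hm => ?_⟩
    · obtain ⟨m', hm', hδ⟩ := hn.1.exists_deltaEnum_le (hEn n) hE (half_pos hε).le m hm
      exact ⟨m', hm', hδ.trans_lt hlt⟩
    · obtain ⟨m', hm', hδ⟩ := hn.2.exists_deltaEnum_le hE (hEn n) (half_pos hε).le m hm
      exact ⟨m', hm', deltaEnum_comm A m m' ▸ hδ.trans_lt hlt⟩

end ApproxOnFirst

theorem abs_measureReal_preimage_sub_le {X L : Type*} [MeasurableSpace X] {μ : Measure X}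
    [IsFiniteMeasure μ] [Fintype L] [MeasurableSpace L] [MeasurableSingletonClass L]
    {c r : X → L} (hc : Measurable c) (hr : Measurable r) {ε : ℝ} (hε : 0 ≤ ε)
    (h : ∀ η, |μ.real (c ⁻¹' {η}) - μ.real (r ⁻¹' {η})| ≤ ε) (C : Set L) :
    |μ.real (c ⁻¹' C) - μ.real (r ⁻¹' C)| ≤ Fintype.card L * ε := by
  classical
  have hsum : ∀ f : X → L, Measurable f →
      μ.real (f ⁻¹' C) = ∑ η ∈ C.toFinset, μ.real (f ⁻¹' {η}) := fun f hf => by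
    rw [sum_measureReal_preimage_singleton _ fun η _ => hf (measurableSet_singleton η),
      coe_toFinset]
  rw [hsum c hc, hsum r hr, ← Finset.sum_sub_distrib]
  calc _ ≤ ∑ η ∈ C.toFinset, |μ.real (c ⁻¹' {η}) - μ.real (r ⁻¹' {η})| :=
        Finset.abs_sum_le_sum_abs _ _
    _ ≤ ∑ _η ∈ C.toFinset, ε := Finset.sum_le_sum fun η _ => h η
    _ ≤ Fintype.card L * ε := by
        rw [Finset.sum_const, nsmul_eq_mul]
        gcongr
        exact_mod_cast Finset.card_le_univ _

theorem exists_forall_mem_exists_lt_eq {β : Type*} {e : ℕ → β} (he : Function.Surjective e)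
    (F : Finset β) : ∃ n, ∀ γ ∈ F, ∃ p < n, e p = γ :=
  ⟨F.sup (Function.surjInv he) + 1, fun γ hγ =>
    ⟨Function.surjInv he γ, Nat.lt_succ_of_le (F.le_sup hγ), Function.surjInv_eq he γ⟩⟩

namespace MPAction

variable {Γ : Type*} [Group Γ] {X : Type*} [MeasurableSpace X] {μ : Measure X}

theorem image_act_eq_preimage (a : MPAction Γ X μ) (γ : Γ) (s : Set X) :
    a.act γ '' s = a.act γ⁻¹ ⁻¹' s := by
  refine congrFun (image_eq_preimage_of_inverse (fun x => ?_) fun x => ?_) s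
  · rw [← a.act_mul, inv_mul_cancel, a.act_one]
  · rw [← a.act_mul, mul_inv_cancel, a.act_one]

theorem act_one_eq_id (a : MPAction Γ X μ) : a.act 1 = id :=
  funext a.act_one

theorem measurable_act (a : MPAction Γ X μ) (γ : Γ) : Measurable (a.act γ) :=
  (a.measurePreserving_act γ).measurable

theorem measurable_phiMap (a : MPAction Γ X μ) {S : Type*} [MeasurableSpace S] {φ : X → S}
    (hφ : Measurable φ) : Measurable (a.phiMap φ) :=
  measurable_pi_lambda _ fun γ => hφ.comp (a.measurable_act γ⁻¹)

theorem isProbabilityMeasure_of_mem_ESet [IsProbabilityMeasure μ] (a : MPAction Γ X μ)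
    {S : Type*} [MeasurableSpace S] {m : Measure (Γ → S)} (hm : m ∈ a.ESet S) :
    IsProbabilityMeasure m := by
  obtain ⟨φ, hφ, rfl⟩ := hm
  exact Measure.isProbabilityMeasure_map (a.measurable_phiMap hφ).aemeasurable

theorem isPartition_fibres {k : ℕ} {c : X → Fin k} (hc : Measurable c) :
    IsPartition fun q => c ⁻¹' {q} :=
  ⟨fun _ => hc (measurableSet_singleton _), fun _ _ hqr => disjoint_singleton.2 hqr |>.preimage c,
    eq_univ_of_forall fun x => mem_iUnion.2 ⟨c x, rfl⟩⟩

theorem IsPartition.exists_eq_fibres {k : ℕ} {A : Fin k → Set X} (hA : IsPartition A) :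
    ∃ c : X → Fin k, Measurable c ∧ A = fun q => c ⁻¹' {q} := by
  have hcover : ∀ x, ∃ q, x ∈ A q := fun x => mem_iUnion.1 (hA.2.2 ▸ mem_univ x)
  choose c hc using hcover
  have hfib : A = fun q => c ⁻¹' {q} := by
    ext q x
    refine ⟨fun hx => ?_, fun hx => (mem_singleton_iff.1 hx) ▸ hc x⟩
    by_contra hne
    exact disjoint_left.1 (hA.2.1 hne) (hc x) hx
  subst hfib
  exact ⟨c, measurable_to_countable' hA.1, rfl⟩

noncomputable def stat (a : MPAction Γ X μ) {L : Type*} (c : X → L) (γ : Γ) (η η' : L) : ℝ :=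
  μ.real (a.act γ '' (c ⁻¹' {η}) ∩ c ⁻¹' {η'})

theorem stat_comp_equiv (a : MPAction Γ X μ) {L L' : Type*} (κ : L ≃ L') (c : X → L) (γ : Γ)
    (η η' : L') : a.stat (κ ∘ c) γ η η' = a.stat c γ (κ.symm η) (κ.symm η') := by
  have hfib : ∀ η, (κ ∘ c) ⁻¹' {η} = c ⁻¹' {κ.symm η} := fun η => by
    ext x
    simp [Equiv.eq_symm_apply]
  simp only [stat, hfib]

theorem stat_one_self (a : MPAction Γ X μ) {L : Type*} (c : X → L) (η : L) :
    a.stat c 1 η η = μ.real (c ⁻¹' {η}) := by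
  rw [stat, a.act_one_eq_id, image_id, inter_self]

theorem stat_mem_Icc [IsProbabilityMeasure μ] (a : MPAction Γ X μ) {L : Type*} (c : X → L)
    (γ : Γ) (η η' : L) : a.stat c γ η η' ∈ Icc 0 1 :=
  ⟨measureReal_nonneg, measureReal_le_one⟩

/-- `Cnk e a n k` before the closure, a `k`-partition being encoded by its index map. -/
def statSet (e : ℕ → Γ) (a : MPAction Γ X μ) (n k : ℕ) : Set (Fin n × Fin k × Fin k → ℝ) :=
  {v | ∃ c : X → Fin k, Measurable c ∧ v = fun pqr => a.stat c (e pqr.1) pqr.2.1 pqr.2.2}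

theorem Cnk_eq_closure_statSet (e : ℕ → Γ) (a : MPAction Γ X μ) (n k : ℕ) :
    Cnk e a n k = closure (statSet e a n k) := by
  show closure _ = closure _
  congr 1
  ext v
  constructor
  · rintro ⟨A, hA, hv⟩
    obtain ⟨c, hc, rfl⟩ := hA.exists_eq_fibres
    exact ⟨c, hc, funext fun ⟨p, q, r⟩ => hv p q r⟩
  · rintro ⟨c, hc, rfl⟩
    exact ⟨_, isPartition_fibres hc, fun _ _ _ => rfl⟩

theorem statSet_nonempty_iff [Nonempty X] (e : ℕ → Γ) (a : MPAction Γ X μ) (n k : ℕ) :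
    (statSet e a n k).Nonempty ↔ 0 < k := by
  refine ⟨fun ⟨_, c, _⟩ => (c (Classical.arbitrary X)).pos, fun hk => ?_⟩
  exact ⟨_, fun _ => ⟨0, hk⟩, measurable_const, rfl⟩

theorem statSet_zero [Nonempty X] (e : ℕ → Γ) (a : MPAction Γ X μ) (n : ℕ) :
    statSet e a n 0 = ∅ :=
  not_nonempty_iff_eq_empty.1 fun h => lt_irrefl 0 ((statSet_nonempty_iff e a n 0).1 h)

theorem statSet_subset_Icc [IsProbabilityMeasure μ] (e : ℕ → Γ) (a : MPAction Γ X μ)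
    (n k : ℕ) : statSet e a n k ⊆ Icc 0 1 := by
  rintro _ ⟨c, -, rfl⟩
  exact ⟨fun _ => (a.stat_mem_Icc ..).1, fun _ => (a.stat_mem_Icc ..).2⟩

theorem hausdorffEDist_statSet_ne_top [IsProbabilityMeasure μ] (e : ℕ → Γ)
    (a b : MPAction Γ X μ) (n k : ℕ) : hausdorffEDist (statSet e a n k) (statSet e b n k) ≠ ⊤ := by
  have := nonempty_of_isProbabilityMeasure μ
  rcases k.eq_zero_or_pos with rfl | hk
  · rw [statSet_zero, statSet_zero, hausdorffEDist_self]
    exact ENNReal.zero_ne_top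
  · exact hausdorffEDist_ne_top_of_nonempty_of_bounded ((statSet_nonempty_iff e a n k).2 hk)
      ((statSet_nonempty_iff e b n k).2 hk) (isBounded_Icc 0 1 |>.subset (statSet_subset_Icc ..))
      (isBounded_Icc 0 1 |>.subset (statSet_subset_Icc ..))

theorem hausdorffDist_Cnk_le_one [IsProbabilityMeasure μ] (e : ℕ → Γ) (a b : MPAction Γ X μ)
    (n k : ℕ) : hausdorffDist (Cnk e a n k) (Cnk e b n k) ≤ 1 := by
  have := nonempty_of_isProbabilityMeasure μ
  have hdist : ∀ (a b : MPAction Γ X μ), ∀ v ∈ statSet e a n k, ∃ w ∈ statSet e b n k,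
      dist v w ≤ 1 := by
    intro a b v hv
    obtain ⟨w, hw⟩ := (statSet_nonempty_iff e b n k).2 ((statSet_nonempty_iff e a n k).1 ⟨v, hv⟩)
    refine ⟨w, hw, (Real.dist_le_of_mem_pi_Icc (statSet_subset_Icc e a n k hv)
      (statSet_subset_Icc e b n k hw)).trans ?_⟩
    exact dist_pi_le_iff zero_le_one |>.2 fun _ => by simp
  rw [Cnk_eq_closure_statSet, Cnk_eq_closure_statSet, hausdorffDist_closure]
  exact hausdorffDist_le_of_mem_dist zero_le_one (hdist a b) (hdist b a)

theorem tendsto_dWE_iff [IsProbabilityMeasure μ] (e : ℕ → Γ) {α : Type*} {l : Filter α}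
    (a : α → MPAction Γ X μ) (b : MPAction Γ X μ) :
    Tendsto (fun m => dWE e (a m) b) l (𝓝 0) ↔
      ∀ n k, Tendsto (fun m => hausdorffDist (Cnk e (a m) n k) (Cnk e b n k)) l (𝓝 0) :=
  (tendsto_tsum_mul_nhds_zero_iff (fun _ => by positivity) summable_two_zpow_neg_sub
    fun m nk => ⟨hausdorffDist_nonneg, hausdorffDist_Cnk_le_one e (a m) b nk.1 nk.2⟩).trans
    Prod.forall

theorem tendsto_hausdorffDist_Cnk_iff [IsProbabilityMeasure μ] (e : ℕ → Γ) {α : Type*}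
    {l : Filter α} (a : α → MPAction Γ X μ) (b : MPAction Γ X μ) (n k : ℕ) :
    Tendsto (fun m => hausdorffDist (Cnk e (a m) n k) (Cnk e b n k)) l (𝓝 0) ↔
      ∀ ε > 0, ∀ᶠ m in l, statSet e (a m) n k ⊆ thickening ε (statSet e b n k) ∧
        statSet e b n k ⊆ thickening ε (statSet e (a m) n k) := by
  simp_rw [Cnk_eq_closure_statSet, hausdorffDist_closure]
  exact tendsto_hausdorffDist_nhds_zero_iff fun m => hausdorffEDist_statSet_ne_top e (a m) b n k

end MPAction

section CantorCoding

def cantorCode (k : ℕ) (q : Fin (k + 1)) : Cantor := fun i => decide (i = (q : ℕ))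

/-- The position of the first `true` among the first `k` coordinates, or `k` if there is none. -/
def cantorIndex (k : ℕ) (x : Cantor) : Fin (k + 1) :=
  ⟨Nat.find (⟨k, Or.inl rfl⟩ : ∃ i, i = k ∨ x i = true),
    Nat.lt_succ_of_le (Nat.find_min' _ (Or.inl rfl))⟩

theorem cantorIndex_eq_iff {k : ℕ} {x : Cantor} {q : Fin (k + 1)} :
    cantorIndex k x = q ↔ ∀ i < min ((q : ℕ) + 1) k, x i = decide (i = (q : ℕ)) := by
  have hqk := Nat.lt_succ_iff.1 q.isLt
  rw [Fin.ext_iff, cantorIndex, Nat.find_eq_iff]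
  constructor
  · rintro ⟨hq, hlt⟩ i hi
    rcases Nat.lt_or_eq_of_le (Nat.lt_succ_iff.1 (lt_of_lt_of_le hi (min_le_left _ _))) with h | rfl
    · simpa [h.ne] using fun hx => hlt i h (Or.inr hx)
    · simpa [(lt_of_lt_of_le hi (min_le_right _ _)).ne] using hq
  · intro h
    refine ⟨?_, fun i hi hik => ?_⟩
    · rcases Nat.lt_or_eq_of_le hqk with hq | hq
      · exact Or.inr (by simpa using h q (by omega))
      · exact Or.inl hq
    · rcases hik with hik | hx
      · omega
      · simpa [hi.ne, hx] using h i (by omega)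

theorem cantorIndex_cantorCode (k : ℕ) (q : Fin (k + 1)) : cantorIndex k (cantorCode k q) = q :=
  cantorIndex_eq_iff.2 fun _ _ => rfl

theorem cantorIndex_preimage_singleton_mem_cantorBasic (k : ℕ) (q : Fin (k + 1)) :
    cantorIndex k ⁻¹' {q} ∈ cantorBasic :=
  ⟨Finset.range (min ((q : ℕ) + 1) k), fun i => decide (i = (q : ℕ)), by
    ext x; simp [cantorIndex_eq_iff]⟩

theorem measurableSet_of_mem_cantorBasic {B : Set Cantor} (hB : B ∈ cantorBasic) :
    MeasurableSet B := by
  obtain ⟨s, σ, rfl⟩ := hB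
  simp only [ofPred_forall]
  exact Finset.measurableSet_biInter s fun n _ => measurable_pi_apply n (measurableSet_singleton _)

theorem measurableSet_of_mem_KCyl {Γ : Type*} {C : Set (Γ → Cantor)} (hC : C ∈ KCyl Γ) :
    MeasurableSet C := by
  obtain ⟨F, B, hB, rfl⟩ := hC
  simp only [ofPred_forall]
  exact Finset.measurableSet_biInter F fun γ hγ =>
    measurable_pi_apply γ (measurableSet_of_mem_cantorBasic (hB γ hγ))

theorem measurable_cantorIndex (k : ℕ) : Measurable (cantorIndex k) :=
  measurable_to_countable' fun q =>
    measurableSet_of_mem_cantorBasic (cantorIndex_preimage_singleton_mem_cantorBasic k q)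

variable {Γ : Type*} [Group Γ]

def pairCyl (k : ℕ) (γ : Γ) (q r : Fin (k + 1)) : Set (Γ → Cantor) :=
  {f | cantorIndex k (f γ) = q ∧ cantorIndex k (f 1) = r}

theorem measurableSet_pairCyl (k : ℕ) (γ : Γ) (q r : Fin (k + 1)) :
    MeasurableSet (pairCyl k γ q r) :=
  ((measurable_cantorIndex k).comp (measurable_pi_apply γ) (measurableSet_singleton q)).inter
    ((measurable_cantorIndex k).comp (measurable_pi_apply 1) (measurableSet_singleton r))

theorem pairCyl_mem_KCyl_or_eq_empty (k : ℕ) (γ : Γ) (q r : Fin (k + 1)) :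
    pairCyl k γ q r ∈ KCyl Γ ∨ pairCyl k γ q r = ∅ := by
  classical
  have hbasic := cantorIndex_preimage_singleton_mem_cantorBasic k
  by_cases hγ : γ = 1
  · subst hγ
    by_cases hqr : q = r
    · subst hqr
      exact Or.inl ⟨{1}, fun _ => cantorIndex k ⁻¹' {q}, fun _ _ => hbasic q, by
        ext f; simp [pairCyl]⟩
    · exact Or.inr (eq_empty_of_forall_notMem fun f hf => hqr (hf.1.symm.trans hf.2))
  · refine Or.inl ⟨{γ, 1}, fun δ => cantorIndex k ⁻¹' {if δ = γ then q else r},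
      fun _ _ => hbasic _, ?_⟩
    ext f
    simp [pairCyl, Ne.symm hγ]

namespace MPAction

variable {X : Type*} [MeasurableSpace X] {μ : Measure X}

theorem stat_cantorIndex_comp (a : MPAction Γ X μ) {ψ : X → Cantor} (hψ : Measurable ψ)
    (k : ℕ) (γ : Γ) (q r : Fin (k + 1)) :
    a.stat (cantorIndex k ∘ ψ) γ q r = (μ.map (a.phiMap ψ)).real (pairCyl k γ q r) := by
  rw [map_measureReal_apply (a.measurable_phiMap hψ) (measurableSet_pairCyl k γ q r), stat,
    image_act_eq_preimage]
  congr 1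
  ext x
  simp [pairCyl, phiMap, a.act_one]

theorem exists_approxOnFirst_imp_subset_thickening [IsProbabilityMeasure μ] (e : ℕ → Γ)
    {A : ℕ → Set (Γ → Cantor)} (hA : KCyl Γ ⊆ range A) (n k : ℕ) {ε : ℝ} (hε : 0 < ε) :
    ∃ N, ∀ a b : MPAction Γ X μ, ApproxOnFirst A N ε (a.ESet Cantor) (b.ESet Cantor) →
      statSet e a n k ⊆ thickening ε (statSet e b n k) := by
  have := nonempty_of_isProbabilityMeasure μ
  rcases k with _ | k
  · exact ⟨0, fun a b _ => by simp [statSet_zero]⟩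
  have hcyl : ∀ pqr : Fin n × Fin (k + 1) × Fin (k + 1), ∃ i,
      A i = pairCyl k (e pqr.1) pqr.2.1 pqr.2.2 ∨ pairCyl k (e pqr.1) pqr.2.1 pqr.2.2 = ∅ :=
    fun pqr => (pairCyl_mem_KCyl_or_eq_empty ..).elim (fun h => (hA h).imp fun _ => Or.inl)
      fun h => ⟨0, Or.inr h⟩
  choose idx hidx using hcyl
  refine ⟨Finset.univ.sup idx + 1, fun a b hab => ?_⟩
  rintro _ ⟨c, hc, rfl⟩
  have hφ : Measurable (cantorCode k ∘ c) := (measurable_of_finite _).comp hc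
  obtain ⟨_, ⟨ψ, hψ, rfl⟩, hclose⟩ := hab _ ⟨_, hφ, rfl⟩
  refine mem_thickening_iff.2 ⟨_, ⟨cantorIndex k ∘ ψ, (measurable_cantorIndex k).comp hψ, rfl⟩,
    (dist_pi_lt_iff hε).2 fun pqr => ?_⟩
  have hc : c = cantorIndex k ∘ cantorCode k ∘ c := funext fun x => (cantorIndex_cantorCode ..).symm
  rw [Real.dist_eq, hc, a.stat_cantorIndex_comp hφ, b.stat_cantorIndex_comp hψ]
  rcases hidx pqr with h | h
  · exact h ▸ hclose _ (Nat.lt_succ_of_le (Finset.le_sup (Finset.mem_univ pqr)))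
  · simpa [h] using hε

end MPAction

end CantorCoding

section Coordinates

variable {Γ : Type*}

def restrictCoords (F : Finset Γ) (S : Finset ℕ) (f : Γ → Cantor) : F → S → Bool :=
  fun γ s => f γ s

def extendCoords (S : Finset ℕ) (τ : S → Bool) : Cantor :=
  fun s => if h : s ∈ S then τ ⟨s, h⟩ else false

theorem extendCoords_apply_coe (S : Finset ℕ) (τ : S → Bool) (s : S) :
    extendCoords S τ s = τ s :=
  dif_pos s.2

theorem measurable_restrictCoords (F : Finset Γ) (S : Finset ℕ) :
    Measurable (restrictCoords F S) :=
  measurable_pi_lambda _ fun γ => measurable_pi_lambda _ fun s =>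
    (measurable_pi_apply (s : ℕ)).comp (measurable_pi_apply (γ : Γ))

def DependsOnCoords (C : Set (Γ → Cantor)) (F : Finset Γ) (S : Finset ℕ) : Prop :=
  ∀ f g, restrictCoords F S f = restrictCoords F S g → f ∈ C → g ∈ C

theorem DependsOnCoords.mono {C : Set (Γ → Cantor)} {F F' : Finset Γ} {S S' : Finset ℕ}
    (h : DependsOnCoords C F S) (hF : F ⊆ F') (hS : S ⊆ S') : DependsOnCoords C F' S' :=
  fun f g hfg => h f g (funext fun γ => funext fun s =>
    congrFun (congrFun hfg ⟨γ, hF γ.2⟩) ⟨s, hS s.2⟩)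

theorem DependsOnCoords.preimage_image {C : Set (Γ → Cantor)} {F : Finset Γ} {S : Finset ℕ}
    (h : DependsOnCoords C F S) : restrictCoords F S ⁻¹' (restrictCoords F S '' C) = C :=
  Subset.antisymm (fun _ ⟨g, hg, hgf⟩ => h g _ hgf hg) (subset_preimage_image _ _)

theorem exists_dependsOnCoords_of_mem_KCyl {C : Set (Γ → Cantor)} (hC : C ∈ KCyl Γ) :
    ∃ F S, DependsOnCoords C F S := by
  classical
  obtain ⟨F, B, hB, rfl⟩ := hC
  choose s σ hsσ using hB
  refine ⟨F, F.attach.biUnion fun γ => s γ.1 γ.2, fun f g hfg hf γ hγ => ?_⟩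
  have hfγ := hf γ hγ
  rw [hsσ γ hγ] at hfγ ⊢
  intro n hn
  have hfg' : f γ n = g γ n := congrFun (congrFun hfg ⟨γ, hγ⟩)
    ⟨n, Finset.mem_biUnion.2 ⟨⟨γ, hγ⟩, Finset.mem_attach _ _, hn⟩⟩
  exact hfg' ▸ hfγ n hn

theorem exists_dependsOnCoords_of_forall_mem_KCyl {A : ℕ → Set (Γ → Cantor)}
    (hA : ∀ i, A i ∈ KCyl Γ) (N : ℕ) : ∃ F S, ∀ i < N, DependsOnCoords (A i) F S := by
  classical
  choose F S hFS using fun i => exists_dependsOnCoords_of_mem_KCyl (hA i)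
  exact ⟨(Finset.range N).biUnion F, (Finset.range N).biUnion S, fun i hi =>
    (hFS i).mono (Finset.subset_biUnion_of_mem F (Finset.mem_range.2 hi))
      (Finset.subset_biUnion_of_mem S (Finset.mem_range.2 hi))⟩

end Coordinates

namespace MPAction

variable {Γ : Type*} [Group Γ] {X : Type*} [MeasurableSpace X] {μ : Measure X}

theorem phiMap_act_inv_apply_one (a : MPAction Γ X μ) {S : Type*} (φ : X → S) (γ : Γ) (x : X) :
    a.phiMap φ (a.act γ⁻¹ x) 1 = a.phiMap φ x γ := by
  simp [phiMap, a.act_one]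

theorem measureReal_setOf_rel_le [IsFiniteMeasure μ] (a b : MPAction Γ X μ) {L : Type*}
    [Fintype L] {c r : X → L} {γ : Γ} {ε : ℝ} (hε : 0 ≤ ε) (R : L → L → Prop)
    (hR : ∀ η η', R η η' → a.stat c γ η η' = 0)
    (hclose : ∀ η η', |a.stat c γ η η' - b.stat r γ η η'| ≤ ε) :
    μ.real {x | R (r (b.act γ⁻¹ x)) (r x)} ≤ Fintype.card L ^ 2 * ε := by
  classical
  set P := Finset.univ.filter fun p : L × L => R p.1 p.2
  calc μ.real {x | R (r (b.act γ⁻¹ x)) (r x)}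
      ≤ μ.real (⋃ p ∈ P, b.act γ '' (r ⁻¹' {p.1}) ∩ r ⁻¹' {p.2}) := by
        refine measureReal_mono (fun x hx => mem_iUnion₂.2 ⟨(r (b.act γ⁻¹ x), r x), ?_, ?_⟩)
          (measure_ne_top μ _)
        · simpa [P] using hx
        · simp [image_act_eq_preimage]
    _ ≤ ∑ p ∈ P, b.stat r γ p.1 p.2 := measureReal_biUnion_finset_le _ _
    _ ≤ ∑ _p ∈ P, ε := Finset.sum_le_sum fun p hp => by
        have h := hclose p.1 p.2
        rw [hR _ _ (Finset.mem_filter.1 hp).2, zero_sub, abs_neg] at h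
        exact (le_abs_self _).trans h
    _ ≤ Fintype.card L ^ 2 * ε := by
        rw [Finset.sum_const, nsmul_eq_mul]
        gcongr
        exact_mod_cast (Finset.card_le_univ P).trans (by simp [sq])

theorem stat_restrictCoords_phiMap_eq_zero (a : MPAction Γ X μ) (φ : X → Cantor) {F : Finset Γ}
    (h1 : 1 ∈ F) (S : Finset ℕ) {γ : Γ} (hγ : γ ∈ F) {η η' : F → S → Bool}
    (h : η ⟨1, h1⟩ ≠ η' ⟨γ, hγ⟩) : a.stat (restrictCoords F S ∘ a.phiMap φ) γ η η' = 0 := by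
  rw [stat, image_act_eq_preimage]
  convert measureReal_empty
  refine eq_empty_of_forall_notMem fun x ⟨hx, hx'⟩ => h ?_
  simp only [mem_preimage, Function.comp_apply, mem_singleton_iff] at hx hx'
  rw [← hx, ← hx']
  exact funext fun s => congrFun (a.phiMap_act_inv_apply_one φ γ x) s

theorem exists_stat_lt_of_subset_thickening {e : ℕ → Γ} {a b : MPAction Γ X μ} {n k : ℕ}
    {ε : ℝ} (h : statSet e a n k ⊆ thickening ε (statSet e b n k)) {L : Type*} [MeasurableSpace L]
    [MeasurableSingletonClass L] (κ : L ≃ Fin k) {F : Finset Γ} (hF : ∀ γ ∈ F, ∃ p < n, e p = γ)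
    {c : X → L} (hc : Measurable c) :
    ∃ r : X → L, Measurable r ∧ ∀ γ ∈ F, ∀ η η', |a.stat c γ η η' - b.stat r γ η η'| < ε := by
  have := Finite.of_equiv _ κ.symm
  obtain ⟨_, ⟨c', hc', rfl⟩, hdist⟩ :=
    mem_thickening_iff.1 (h ⟨κ ∘ c, (measurable_of_finite κ).comp hc, rfl⟩)
  refine ⟨κ.symm ∘ c', (measurable_of_finite _).comp hc', fun γ hγ η η' => ?_⟩
  obtain ⟨p, hp, rfl⟩ := hF γ hγ
  have hcoord := (dist_le_pi_dist _ _ (⟨p, hp⟩, κ η, κ η')).trans_lt hdist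
  simpa [Real.dist_eq, stat_comp_equiv] using hcoord

theorem restrictCoords_phiMap_extendCoords (b : MPAction Γ X μ) {F : Finset Γ} (h1 : 1 ∈ F)
    (S : Finset ℕ) (r : X → (F → S → Bool)) (x : X) (γ : F) :
    restrictCoords F S (b.phiMap (fun y => extendCoords S (r y ⟨1, h1⟩)) x) γ =
      r (b.act (γ : Γ)⁻¹ x) ⟨1, h1⟩ :=
  funext fun s => extendCoords_apply_coe S _ s

section NameApproximation

variable [DecidableEq Γ] [IsFiniteMeasure μ] (a b : MPAction Γ X μ) {F : Finset Γ} (h1 : 1 ∈ F)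
  {S : Finset ℕ} {φ : X → Cantor} {r : X → (F → S → Bool)} {ε : ℝ}

/-- The exceptional points lie in pieces `γ^b r⁻¹{η} ∩ r⁻¹{η'}` with `η 1 ≠ η' γ`, whose
`a`-counterparts are empty. -/
theorem measureReal_restrictCoords_phiMap_ne_le (hε : 0 ≤ ε)
    (hclose : ∀ γ ∈ F, ∀ η η',
      |a.stat (restrictCoords F S ∘ a.phiMap φ) γ η η' - b.stat r γ η η'| ≤ ε) :
    μ.real {x | restrictCoords F S (b.phiMap (fun y => extendCoords S (r y ⟨1, h1⟩)) x) ≠ r x} ≤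
      F.card * Fintype.card (F → S → Bool) ^ 2 * ε := by
  calc _ ≤ μ.real (⋃ γ : F, {x | r (b.act (γ : Γ)⁻¹ x) ⟨1, h1⟩ ≠ r x γ}) := by
        refine measureReal_mono (fun x hx => ?_) (measure_ne_top μ _)
        obtain ⟨γ, hγ⟩ := Function.ne_iff.1 hx
        exact mem_iUnion.2 ⟨γ, by rwa [restrictCoords_phiMap_extendCoords] at hγ⟩
    _ ≤ ∑ γ : F, μ.real {x | r (b.act (γ : Γ)⁻¹ x) ⟨1, h1⟩ ≠ r x γ} :=
        measureReal_iUnion_fintype_le _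
    _ ≤ ∑ _γ : F, Fintype.card (F → S → Bool) ^ 2 * ε := Finset.sum_le_sum fun γ _ =>
        measureReal_setOf_rel_le a b hε (fun η η' => η ⟨1, h1⟩ ≠ η' γ)
          (fun _ _ h => a.stat_restrictCoords_phiMap_eq_zero φ h1 S γ.2 h) (hclose γ γ.2)
    _ = F.card * Fintype.card (F → S → Bool) ^ 2 * ε := by simp [mul_assoc]

theorem abs_measureReal_restrictCoords_phiMap_sub_le (hφ : Measurable φ) (hr : Measurable r)
    (hε : 0 ≤ ε) (hclose : ∀ γ ∈ F, ∀ η η',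
      |a.stat (restrictCoords F S ∘ a.phiMap φ) γ η η' - b.stat r γ η η'| ≤ ε)
    (C : Set (F → S → Bool)) :
    |μ.real ((restrictCoords F S ∘ a.phiMap φ) ⁻¹' C) -
        μ.real ((restrictCoords F S ∘ b.phiMap (fun y => extendCoords S (r y ⟨1, h1⟩))) ⁻¹' C)| ≤
      (Fintype.card (F → S → Bool) + F.card * Fintype.card (F → S → Bool) ^ 2) * ε := by
  set c := restrictCoords F S ∘ a.phiMap φ
  set c' := restrictCoords F S ∘ b.phiMap (fun y => extendCoords S (r y ⟨1, h1⟩))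
  have hC : MeasurableSet C := C.to_countable.measurableSet
  have hc : Measurable c := (measurable_restrictCoords F S).comp (a.measurable_phiMap hφ)
  have hc' : Measurable c' := (measurable_restrictCoords F S).comp
    (b.measurable_phiMap ((measurable_of_finite fun η : F → S → Bool => extendCoords S
      (η ⟨1, h1⟩)).comp hr))
  have h_diag : |μ.real (c ⁻¹' C) - μ.real (r ⁻¹' C)| ≤ Fintype.card (F → S → Bool) * ε :=
    abs_measureReal_preimage_sub_le hc hr hε
      (fun η => by simpa only [stat_one_self] using hclose 1 h1 η η) C
  have h_name : |μ.real (r ⁻¹' C) - μ.real (c' ⁻¹' C)| ≤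
      F.card * Fintype.card (F → S → Bool) ^ 2 * ε := by
    refine (abs_measureReal_sub_le_measureReal_symmDiff (hr hC).nullMeasurableSet
      (hc' hC).nullMeasurableSet).trans ((measureReal_mono (fun x hx heq => ?_)
        (measure_ne_top μ _)).trans (measureReal_restrictCoords_phiMap_ne_le a b h1 hε hclose))
    have heq' : c' x = r x := heq
    simp only [mem_symmDiff, mem_preimage, heq'] at hx
    tauto
  calc _ ≤ |μ.real (c ⁻¹' C) - μ.real (r ⁻¹' C)| + |μ.real (r ⁻¹' C) - μ.real (c' ⁻¹' C)| :=
        abs_sub_le _ _ _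
    _ ≤ _ := by rw [add_mul]; exact add_le_add h_diag h_name

end NameApproximation

theorem exists_subset_thickening_imp_approxOnFirst [IsProbabilityMeasure μ] {e : ℕ → Γ}
    (he : Function.Surjective e) {A : ℕ → Set (Γ → Cantor)} (hA : ∀ i, A i ∈ KCyl Γ) (N : ℕ)
    {ε : ℝ} (hε : 0 < ε) :
    ∃ n k ε₁, 0 < ε₁ ∧ ∀ a b : MPAction Γ X μ, statSet e a n k ⊆ thickening ε₁ (statSet e b n k) →
      ApproxOnFirst A N ε (a.ESet Cantor) (b.ESet Cantor) := by
  classical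
  obtain ⟨F₀, S, hdep⟩ := exists_dependsOnCoords_of_forall_mem_KCyl hA N
  set F := insert 1 F₀
  have h1 : (1 : Γ) ∈ F := Finset.mem_insert_self 1 F₀
  obtain ⟨n, hn⟩ := exists_forall_mem_exists_lt_eq he F
  set K := Fintype.card (F → S → Bool)
  set C : ℝ := K + F.card * K ^ 2
  refine ⟨n, K, ε / (C + 1), by positivity, fun a b hab => ?_⟩
  rintro _ ⟨φ, hφ, rfl⟩
  obtain ⟨r, hr, hrc⟩ := exists_stat_lt_of_subset_thickening hab (Fintype.equivFin _) hn
    ((measurable_restrictCoords F S).comp (a.measurable_phiMap hφ))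
  have hψ : Measurable fun y => extendCoords S (r y ⟨1, h1⟩) :=
    (measurable_of_finite fun η : F → S → Bool => extendCoords S (η ⟨1, h1⟩)).comp hr
  refine ⟨_, ⟨_, hψ, rfl⟩, fun i hi => ?_⟩
  have hAi := measurableSet_of_mem_KCyl (hA i)
  rw [map_measureReal_apply (a.measurable_phiMap hφ) hAi,
    map_measureReal_apply (b.measurable_phiMap hψ) hAi,
    ← ((hdep i hi).mono (Finset.subset_insert 1 F₀) subset_rfl).preimage_image]
  calc _ ≤ C * (ε / (C + 1)) := abs_measureReal_restrictCoords_phiMap_sub_le a b h1 hφ hr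
        (by positivity) (fun γ hγ η η' => (hrc γ hγ η η').le) _
    _ < ε := by
        rw [mul_div_assoc', div_lt_iff₀ (by positivity)]
        linarith

end MPAction

theorem dWE_tendsto_iff_ESet_hausdorff_tendsto_general
    (Γ : Type) [Group Γ]
    (X : Type) [MeasurableSpace X]
    (μ : Measure X) [IsProbabilityMeasure μ]
    (e : ℕ → Γ) (he : Function.Surjective e)
    (A : ℕ → Set (Γ → Cantor)) (hA : Enumerates A (KCyl Γ))
    (a : ℕ → MPAction Γ X μ) (b : MPAction Γ X μ) :
    Filter.Tendsto (fun n => MPAction.dWE e (a n) b) Filter.atTop (nhds 0) ↔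
      HausTendsto (deltaEnum A) (fun n => (a n).ESet Cantor) (b.ESet Cantor) := by
  have hprob (c : MPAction Γ X μ) : ∀ m ∈ c.ESet Cantor, IsProbabilityMeasure m :=
    fun _ => c.isProbabilityMeasure_of_mem_ESet
  simp_rw [MPAction.tendsto_dWE_iff, MPAction.tendsto_hausdorffDist_Cnk_iff,
    hausTendsto_deltaEnum_iff (fun n => hprob (a n)) (hprob b)]
  constructor
  · intro h N ε hε
    obtain ⟨n, k, ε₁, hε₁, himp⟩ :=
      MPAction.exists_subset_thickening_imp_approxOnFirst (X := X) (μ := μ) he hA.1 N hε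
    filter_upwards [h n k ε₁ hε₁] with m hm
    exact ⟨himp _ _ hm.1, himp _ _ hm.2⟩
  · intro h n k ε hε
    obtain ⟨N, himp⟩ :=
      MPAction.exists_approxOnFirst_imp_subset_thickening (X := X) (μ := μ) e hA.2 n k hε
    filter_upwards [h N ε hε] with m hm
    exact ⟨himp _ _ hm.1, himp _ _ hm.2⟩

/-- `d(a_n, a) → 0` if and only if the closures of `E(a_n,K)` converge to the
closure of `E(a,K)` in the Hausdorff metric topology on the hyperspace of compact subsets of
`M_s(K^Γ)` (expressed via the compatible metric `δ_K` built from an enumeration of the clopen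
cylinder sets of `K^Γ`).  In other words, the topology `τ₁` induced by the metric `d` on
`A_∼(Γ,X,μ)` coincides with the topology `τ₂` induced by `a ↦ closure (E(a,K))`. -/
theorem dWE_tendsto_iff_ESet_hausdorff_tendsto
    (Γ : Type) [Group Γ] [Countable Γ]
    (X : Type) [MeasurableSpace X] [StandardBorelSpace X]
    (μ : Measure X) [IsProbabilityMeasure μ] [NullSingletonClass μ]
    (e : ℕ → Γ) (he : Function.Surjective e)
    (A : ℕ → Set (Γ → Cantor)) (hA : Enumerates A (KCyl Γ))
    (a : ℕ → MPAction Γ X μ) (b : MPAction Γ X μ) :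
    Filter.Tendsto (fun n => MPAction.dWE e (a n) b) Filter.atTop (nhds 0) ↔
      HausTendsto (deltaEnum A) (fun n => (a n).ESet Cantor) (b.ESet Cantor) :=
  dWE_tendsto_iff_ESet_hausdorff_tendsto_general Γ X μ e he A hA a b
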